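/- Let p = 4ℓ + 1 be a prime with ℓ ≡ 1 (mod 4) and ℓ > 1, let n be an odd positive integer with 0 < n < 2ℓ, and let a be a nonzero element of F_p. Then for f = x^n·(x^4 + a), the remainder of f^{ℓ-1} upon division by x^p - x has degree equal to p - 1; in particular f is not a permutation polynomial of F_p. -/

import Mathlib

/-!
Over a finite field `K` of size `q`, `∑ x, x ^ i` is `-1` when `i ≠ 0` and `q - 1 ∣ i`,
and `0` otherwise. Since `g %ₘ (X ^ q - X)` has degree `< q` and agrees with `g` on `K`,
summing its values picks out `-1` times its coefficient of `X ^ (q - 1)`; so that remainder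
has degree `q - 1` as soon as `∑ x, g x ≠ 0`, while for a permutation `g` and
`0 < i < q - 1` the sum `∑ x, g x ^ i` vanishes.

For `f = X ^ n * (X ^ 4 + a)` and `i = ℓ - 1 = 4m`, the binomial expansion writes
`∑ x, f x ^ i` as a combination of power sums with exponents `4 (n m + k)`, `k < ℓ`.
Exactly one of them is divisible by `p - 1 = 4ℓ`, so the sum is
`-a ^ (ℓ - 1 - k) * (ℓ - 1).choose k`, which is nonzero since `ℓ - 1 < p`.
-/

open Polynomial Finset

namespace FiniteField

variable {K : Type*} [Field K] [Fintype K]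

theorem sum_pow_of_ne_zero {i : ℕ} (hi : i ≠ 0) :
    ∑ x : K, x ^ i = if Fintype.card K - 1 ∣ i then -1 else 0 := by
  classical
  rw [← sum_pow_units, ← unitsEquivNeZero.symm.sum_comp, ← sum_filter_of_ne (p := (· ≠ 0))
    fun x _ hx => by rintro rfl; exact hx (zero_pow hi), sum_subtype (p := (· ≠ 0)) _ (by simp)]
  rfl

theorem sum_pow_comp_eq_zero_of_bijective {f : K → K} (hf : f.Bijective) {i : ℕ}
    (hi : i < Fintype.card K - 1) : ∑ x, f x ^ i = 0 := by
  rw [Fintype.sum_bijective f hf (fun x => f x ^ i) (· ^ i) fun _ => rfl]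
  exact sum_pow_lt_card_sub_one K i hi

theorem sum_eval_eq_neg_coeff_card_sub_one {r : K[X]} (hr : r.natDegree < Fintype.card K) :
    ∑ x, r.eval x = -r.coeff (Fintype.card K - 1) := by
  have hq : Fintype.card K = Fintype.card K - 1 + 1 := (Nat.sub_add_cancel Fintype.card_pos).symm
  simp_rw [eval_eq_sum_range' hr]
  rw [sum_comm, hq, sum_range_succ, ← hq]
  simp_rw [← mul_sum]
  rw [sum_eq_zero fun j hj => by rw [sum_pow_lt_card_sub_one K j (mem_range.mp hj), mul_zero],
    sum_pow_of_ne_zero (by have := Fintype.one_lt_card (α := K); omega), if_pos dvd_rfl]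
  ring

theorem eval_modByMonic_X_pow_card_sub_X (g : K[X]) (x : K) :
    (g %ₘ (X ^ Fintype.card K - X)).eval x = g.eval x := by
  simp [modByMonic_eq_sub_mul_div, pow_card]

theorem degree_modByMonic_X_pow_card_sub_X {q : ℕ} (hq : Fintype.card K = q) {g : K[X]}
    (hg : ∑ x, g.eval x ≠ 0) : (g %ₘ (X ^ q - X)).degree = (q - 1 : ℕ) := by
  subst hq
  set r := g %ₘ (X ^ Fintype.card K - X)
  have hq1 : 1 < Fintype.card K := Fintype.one_lt_card
  have hdeg := X_pow_card_sub_X_natDegree_eq K hq1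
  have hr : r.natDegree < Fintype.card K := by
    have hmonic : (X ^ Fintype.card K - X : K[X]).Monic :=
      monic_X_pow_sub (by rw [degree_X]; exact_mod_cast hq1)
    have hne : (X ^ Fintype.card K - X : K[X]) ≠ 1 :=
      ne_of_apply_ne natDegree (by rw [hdeg, natDegree_one]; omega)
    simpa only [hdeg] using natDegree_modByMonic_lt g hmonic hne
  have hcoeff : r.coeff (Fintype.card K - 1) ≠ 0 := by
    rw [← neg_ne_zero, ← sum_eval_eq_neg_coeff_card_sub_one hr]
    simpa only [r, eval_modByMonic_X_pow_card_sub_X] using hg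
  exact degree_eq_of_le_of_coeff_ne_zero (degree_le_of_natDegree_le (by omega)) hcoeff

theorem sum_pow_mul_pow_add_pow {n e N : ℕ} (hnN : n * N ≠ 0) (a : K) :
    ∑ x : K, (x ^ n * (x ^ e + a)) ^ N =
      -∑ k ∈ range (N + 1) with Fintype.card K - 1 ∣ n * N + e * k,
        a ^ (N - k) * N.choose k := by
  have hexp : ∀ x : K, (x ^ n * (x ^ e + a)) ^ N =
      ∑ k ∈ range (N + 1), a ^ (N - k) * N.choose k * x ^ (n * N + e * k) := fun x => by
    rw [mul_pow, add_pow, mul_sum]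
    refine sum_congr rfl fun k _ => ?_
    ring
  simp_rw [hexp]
  rw [sum_comm, sum_filter, ← sum_neg_distrib]
  refine sum_congr rfl fun k _ => ?_
  rw [← mul_sum, sum_pow_of_ne_zero (by positivity)]
  split_ifs <;> simp

end FiniteField

theorem Nat.filter_range_dvd_add_eq_singleton (ℓ c : ℕ) [NeZero ℓ] :
    {k ∈ range ℓ | ℓ ∣ c + k} = {(-(c : ZMod ℓ)).val} := by
  ext k
  simp only [mem_filter, mem_range, mem_singleton, ← ZMod.natCast_eq_zero_iff, Nat.cast_add,
    add_eq_zero_iff_eq_neg']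
  constructor
  · rintro ⟨hk, h⟩
    rw [← h, ZMod.val_natCast_of_lt hk]
  · rintro rfl
    exact ⟨ZMod.val_lt _, ZMod.natCast_zmod_val _⟩

theorem ZMod.sum_pow_mul_pow_four_add_ne_zero {p ℓ n : ℕ} [Fact p.Prime] (hpl : p = 4 * ℓ + 1)
    (hl4 : ℓ % 4 = 1) (hl1 : 1 < ℓ) (hn : 0 < n) {a : ZMod p} (ha : a ≠ 0) :
    ∑ x : ZMod p, (x ^ n * (x ^ 4 + a)) ^ (ℓ - 1) ≠ 0 := by
  obtain ⟨m, hm⟩ : ∃ m, ℓ - 1 = 4 * m := ⟨ℓ / 4, by omega⟩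
  have : NeZero ℓ := ⟨by omega⟩
  have hfilter : {k ∈ range (ℓ - 1 + 1) | Fintype.card (ZMod p) - 1 ∣ n * (ℓ - 1) + 4 * k} =
      {k ∈ range ℓ | ℓ ∣ n * m + k} := by
    rw [ZMod.card, Nat.sub_add_cancel hl1.le]
    refine filter_congr fun k _ => ?_
    rw [hm, show p - 1 = 4 * ℓ by omega, show n * (4 * m) + 4 * k = 4 * (n * m + k) by ring]
    exact Nat.mul_dvd_mul_iff_left (by norm_num)
  rw [FiniteField.sum_pow_mul_pow_add_pow (Nat.mul_ne_zero hn.ne' (by omega)) a, hfilter,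
    Nat.filter_range_dvd_add_eq_singleton, sum_singleton, neg_ne_zero]
  refine mul_ne_zero (pow_ne_zero _ ha) ?_
  have hk := ZMod.val_lt (-(n * m : ℕ) : ZMod ℓ)
  have hp : p.Prime := Fact.out
  rw [Ne, ZMod.natCast_eq_zero_iff, ← hp.coprime_iff_not_dvd]
  exact hp.coprime_choose_of_lt (by omega) (by omega)

theorem stmt_16_general (p ℓ : ℕ) (hp : p.Prime) (hpl : p = 4 * ℓ + 1)
    (hl4 : ℓ % 4 = 1) (hl1 : 1 < ℓ)
    (n : ℕ) (hn : 0 < n)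
    (a : ZMod p) (ha : a ≠ 0) :
    (((X ^ n * (X ^ 4 + C a)) ^ (ℓ - 1) %ₘ (X ^ p - X)).degree
        = ((p - 1 : ℕ) : WithBot ℕ)) ∧
      ¬ Function.Bijective
        (fun x : ZMod p => Polynomial.eval x (X ^ n * (X ^ 4 + C a))) := by
  have : Fact p.Prime := ⟨hp⟩
  have hsum := ZMod.sum_pow_mul_pow_four_add_ne_zero hpl hl4 hl1 hn ha
  refine ⟨FiniteField.degree_modByMonic_X_pow_card_sub_X (ZMod.card p) (by simpa using hsum),
    fun hbij => hsum ?_⟩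
  simpa using FiniteField.sum_pow_comp_eq_zero_of_bijective hbij (i := ℓ - 1)
    (by rw [ZMod.card]; omega)

theorem stmt_16 (p ℓ : ℕ) (hp : p.Prime) (hpl : p = 4 * ℓ + 1)
    (hl4 : ℓ % 4 = 1) (hl1 : 1 < ℓ)
    (n : ℕ) (hn : 0 < n) (hn2l : n < 2 * ℓ) (hnodd : Odd n)
    (a : ZMod p) (ha : a ≠ 0) :
    (((X ^ n * (X ^ 4 + C a)) ^ (ℓ - 1) %ₘ (X ^ p - X)).degree
        = ((p - 1 : ℕ) : WithBot ℕ)) ∧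
      ¬ Function.Bijective
        (fun x : ZMod p => Polynomial.eval x (X ^ n * (X ^ 4 + C a))) :=
  stmt_16_general p ℓ hp hpl hl4 hl1 n hn a ha
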